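/- Let λ > 0 and [a,b] = [0, π/λ]. Then M(λ, π) := sup over all partitions Δ of [0, π/λ] of the sup-norm of the L²-orthogonal projector onto the trigonometric spline space 𝕊(D²+λ², Δ) is finite. -/

import Mathlib

open Real intervalIntegral


/-- The `L²[a,b]` inner product `∫_a^b f g`. -/
noncomputable def ip (a b : ℝ) (f g : ℝ → ℝ) : ℝ := ∫ x in a..b, f x * g x

/-- `s` is a trigonometric `L`-spline for `L = D² + λ²` on the partition
`t 0 < t 1 < ⋯ < t n`. -/
def IsTrigSpline (l : ℝ) (n : ℕ) (t : ℕ → ℝ) (s : ℝ → ℝ) : Prop :=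
  ContinuousOn s (Set.Icc (t 0) (t n)) ∧
  ∀ i < n, ∃ A B : ℝ, ∀ x ∈ Set.Icc (t i) (t (i + 1)),
    s x = A * Real.sin (l * x) + B * Real.cos (l * x)

section Ints
variable {l : ℝ} (hl : 0 < l)

lemma hd_lin (s x : ℝ) : HasDerivAt (fun x : ℝ => l*(x - s)) l x := by
  simpa using ((hasDerivAt_id x).sub_const s).const_mul l

lemma hd_lin' (u x : ℝ) : HasDerivAt (fun x : ℝ => l*(u - x)) (-l) x := by
  simpa using ((hasDerivAt_id x).const_sub u).const_mul l

include hl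

lemma intJ1 (s u : ℝ) :
    ∫ x in s..u, Real.sin (l*(x - s)) = (1 - Real.cos (l*(u - s)))/l := by
  have key : ∀ x ∈ Set.uIcc s u, HasDerivAt (fun x => -(Real.cos (l*(x - s))/l))
      (Real.sin (l*(x - s))) x := by
    intro x _
    have h := (((Real.hasDerivAt_cos (l*(x-s))).comp x (hd_lin s x)).div_const l).neg
    exact h.congr_deriv (by field_simp)
  rw [intervalIntegral.integral_eq_sub_of_hasDerivAt key
    (Continuous.intervalIntegrable (by fun_prop) _ _)]
  simp only [sub_self, mul_zero, Real.cos_zero]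
  field_simp
  ring

lemma intJ1' (s u : ℝ) :
    ∫ x in s..u, Real.sin (l*(u - x)) = (1 - Real.cos (l*(u - s)))/l := by
  have key : ∀ x ∈ Set.uIcc s u, HasDerivAt (fun x => Real.cos (l*(u - x))/l)
      (Real.sin (l*(u - x))) x := by
    intro x _
    have h := ((Real.hasDerivAt_cos (l*(u-x))).comp x (hd_lin' u x)).div_const l
    exact h.congr_deriv (by field_simp)
  rw [intervalIntegral.integral_eq_sub_of_hasDerivAt key
    (Continuous.intervalIntegrable (by fun_prop) _ _)]
  simp only [sub_self, mul_zero, Real.cos_zero]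
  field_simp

lemma intJ2 (s u : ℝ) :
    ∫ x in s..u, Real.sin (l*(x - s))^2
      = (l*(u-s) - Real.sin (l*(u - s)) * Real.cos (l*(u - s)))/(2*l) := by
  have key : ∀ x ∈ Set.uIcc s u,
      HasDerivAt (fun x => x/2 - Real.sin (2*(l*(x - s)))/(4*l))
      (Real.sin (l*(x - s))^2) x := by
    intro x _
    have hc : HasDerivAt (fun x : ℝ => 2*(l*(x - s))) (2*l) x := by
      simpa using (hd_lin s x).const_mul 2
    have h := ((hasDerivAt_id x).div_const 2).sub
      (((Real.hasDerivAt_sin (2*(l*(x-s)))).comp x hc).div_const (4*l))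
    apply h.congr_deriv
    rw [Real.cos_two_mul, Real.cos_sq']
    field_simp
    ring
  rw [intervalIntegral.integral_eq_sub_of_hasDerivAt key
    (Continuous.intervalIntegrable (by fun_prop) _ _)]
  have h2 : Real.sin (2*(l*(u-s))) = 2 * Real.sin (l*(u-s)) * Real.cos (l*(u-s)) := Real.sin_two_mul _
  simp only [sub_self, mul_zero, Real.sin_zero]
  rw [h2]
  field_simp
  ring

lemma intJ2' (s u : ℝ) :
    ∫ x in s..u, Real.sin (l*(u - x))^2
      = (l*(u-s) - Real.sin (l*(u - s)) * Real.cos (l*(u - s)))/(2*l) := by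
  have key : ∀ x ∈ Set.uIcc s u,
      HasDerivAt (fun x => x/2 + Real.sin (2*(l*(u - x)))/(4*l))
      (Real.sin (l*(u - x))^2) x := by
    intro x _
    have hc : HasDerivAt (fun x : ℝ => 2*(l*(u - x))) (-(2*l)) x := by
      simpa using (hd_lin' u x).const_mul 2
    have h := ((hasDerivAt_id x).div_const 2).add
      (((Real.hasDerivAt_sin (2*(l*(u - x)))).comp x hc).div_const (4*l))
    apply h.congr_deriv
    rw [Real.cos_two_mul, Real.cos_sq']
    field_simp
    ring
  rw [intervalIntegral.integral_eq_sub_of_hasDerivAt key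
    (Continuous.intervalIntegrable (by fun_prop) _ _)]
  have h2 : Real.sin (2*(l*(u-s))) = 2 * Real.sin (l*(u-s)) * Real.cos (l*(u-s)) := Real.sin_two_mul _
  simp only [sub_self, mul_zero, Real.sin_zero]
  rw [h2]
  field_simp
  ring

lemma intJ3 (s u : ℝ) :
    ∫ x in s..u, Real.sin (l*(u - x)) * Real.sin (l*(x - s))
      = (Real.sin (l*(u-s)) - l*(u-s) * Real.cos (l*(u - s)))/(2*l) := by
  have key : ∀ x ∈ Set.uIcc s u,
      HasDerivAt (fun x => -(Real.sin (l*(u + s - 2*x))/(4*l)) - Real.cos (l*(u-s)) * x / 2)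
      (Real.sin (l*(u - x)) * Real.sin (l*(x - s))) x := by
    intro x _
    have hc : HasDerivAt (fun x : ℝ => l*(u + s - 2*x)) (-(l*2)) x := by
      have h0 := ((hasDerivAt_id x).const_mul 2).const_sub (u+s)
      simpa using (h0.const_mul l)
    have h := ((((Real.hasDerivAt_sin (l*(u + s - 2*x))).comp x hc).div_const (4*l)).neg).sub
      (((hasDerivAt_id x).const_mul (Real.cos (l*(u-s)))).div_const 2)
    apply h.congr_deriv
    have e1 : l*(u - x) = l*(u-s) - l*(x-s) := by ring
    have e2 : l*(u + s - 2*x) = l*(u-s) - 2*(l*(x-s)) := by ring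
    rw [e1, e2, Real.sin_sub, Real.cos_sub, Real.cos_two_mul, Real.sin_two_mul, Real.cos_sq']
    field_simp
    ring
  rw [intervalIntegral.integral_eq_sub_of_hasDerivAt key
    (Continuous.intervalIntegrable (by fun_prop) _ _)]
  have e3 : l*(u + s - 2*s) = l*(u-s) := by ring
  have e4 : l*(u + s - 2*u) = -(l*(u-s)) := by ring
  rw [e3, e4, Real.sin_neg]
  field_simp
  ring

lemma intPsq (A B s u : ℝ) :
    ∫ x in s..u, (A * Real.sin (l*x) + B * Real.cos (l*x))^2
      = (A^2+B^2)*(u-s)/2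
        - ((A^2-B^2)*(Real.sin (2*(l*u)) - Real.sin (2*(l*s)))
           + 2*A*B*(Real.cos (2*(l*u)) - Real.cos (2*(l*s))))/(4*l) := by
  have key : ∀ x ∈ Set.uIcc s u,
      HasDerivAt (fun x => (A^2+B^2)*x/2
        - ((A^2-B^2)*Real.sin (2*(l*x)) + 2*A*B*Real.cos (2*(l*x)))/(4*l))
      ((A * Real.sin (l*x) + B * Real.cos (l*x))^2) x := by
    intro x _
    have hc : HasDerivAt (fun x : ℝ => 2*(l*x)) (2*l) x := by
      simpa using ((hasDerivAt_id x).const_mul l).const_mul 2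
    have h := (((hasDerivAt_id x).const_mul ((A^2+B^2))).div_const 2).sub
      (((((Real.hasDerivAt_sin (2*(l*x))).comp x hc).const_mul (A^2-B^2)).add
        (((Real.hasDerivAt_cos (2*(l*x))).comp x hc).const_mul (2*A*B))).div_const (4*l))
    apply h.congr_deriv
    rw [Real.cos_two_mul, Real.sin_two_mul, Real.cos_sq']
    field_simp
    linear_combination (-(8*B^2)) * Real.sin_sq_add_cos_sq (l*x)
  rw [intervalIntegral.integral_eq_sub_of_hasDerivAt key
    (Continuous.intervalIntegrable (by fun_prop) _ _)]
  field_simp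
  ring

end Ints

lemma one_sub_cos_lb {t : ℝ} (h0 : 0 ≤ t) (h1 : t ≤ π/2) :
    2/π^2 * t^2 ≤ 1 - Real.cos t := by
  have hπ := Real.pi_pos
  have hj : 2/π * (t/2) ≤ Real.sin (t/2) :=
    Real.mul_le_sin (by linarith) (by linarith)
  have h2 : Real.sin (t/2) ^ 2 = 1/2 - Real.cos (2*(t/2))/2 := Real.sin_sq_eq_half_sub _
  have ht : 2*(t/2) = t := by ring
  rw [ht] at h2
  have hs0 : 0 ≤ Real.sin (t/2) :=
    Real.sin_nonneg_of_nonneg_of_le_pi (by linarith) (by linarith)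
  have hr0 : 0 ≤ 2/π * (t/2) := by positivity
  have hsq : (2/π * (t/2))^2 ≤ Real.sin (t/2)^2 := by
    apply sq_le_sq' (by linarith) hj
  have he : (2/π * (t/2))^2 = t^2/π^2 := by field_simp
  rw [he] at hsq
  have he2 : 2/π^2 * t^2 = 2*(t^2/π^2) := by ring
  linarith

lemma sub_sin_lb {σ : ℝ} (h0 : 0 ≤ σ) (h1 : σ ≤ π/2) :
    2/(3*π^2) * σ^3 ≤ σ - Real.sin σ := by
  set c : ℝ := 2/(3*π^2) with hc
  have hπ := Real.pi_pos
  have key : MonotoneOn (fun t => t - Real.sin t - c * t^3) (Set.Icc 0 (π/2)) := by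
    apply monotoneOn_of_deriv_nonneg (convex_Icc _ _)
    · exact (continuous_id.sub Real.continuous_sin |>.sub (continuous_const.mul (continuous_pow 3))).continuousOn
    · intro x hx
      exact ((differentiable_id.sub Real.differentiable_sin).sub
        ((differentiable_const _).mul (differentiable_pow 3))).differentiableAt.differentiableWithinAt
    · intro x hx
      rw [interior_Icc] at hx
      obtain ⟨hx1, hx2⟩ := hx
      have hD : HasDerivAt (fun t => t - Real.sin t - c * t^3)
          (1 - Real.cos x - c * (3 * x^2)) x := by
        have h := ((hasDerivAt_id' (x := x)).sub (Real.hasDerivAt_sin x)).sub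
          ((hasDerivAt_pow 3 x).const_mul c)
        exact h.congr_deriv (by push_cast; ring)
      rw [hD.deriv]
      have h1c := one_sub_cos_lb hx1.le hx2.le
      have hcc : c * (3*x^2) = 2/π^2 * x^2 := by rw [hc]; field_simp
      linarith
  have h := key (Set.mem_Icc.mpr ⟨le_refl 0, by linarith⟩) (Set.mem_Icc.mpr ⟨h0, h1⟩) h0
  simpa using h

lemma sin_sub_mul_cos_nonneg {σ : ℝ} (h0 : 0 ≤ σ) (h1 : σ ≤ π/2) :
    0 ≤ Real.sin σ - σ * Real.cos σ := by
  have hπ := Real.pi_pos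
  have key : MonotoneOn (fun t => Real.sin t - t * Real.cos t) (Set.Icc 0 (π/2)) := by
    apply monotoneOn_of_deriv_nonneg (convex_Icc _ _)
    · exact (Real.continuous_sin.sub (continuous_id.mul Real.continuous_cos)).continuousOn
    · intro x hx
      exact (Real.differentiable_sin.sub (differentiable_id.mul Real.differentiable_cos)).differentiableAt.differentiableWithinAt
    · intro x hx
      rw [interior_Icc] at hx
      obtain ⟨hx1, hx2⟩ := hx
      have hD : HasDerivAt (fun t => Real.sin t - t * Real.cos t) (x * Real.sin x) x := by
        have h := (Real.hasDerivAt_sin x).sub ((hasDerivAt_id' (x := x)).mul (Real.hasDerivAt_cos x))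
        exact h.congr_deriv (by ring)
      rw [hD.deriv]
      exact mul_nonneg hx1.le (Real.sin_nonneg_of_nonneg_of_le_pi hx1.le (by linarith))
  have h := key (Set.mem_Icc.mpr ⟨le_refl 0, by linarith⟩) (Set.mem_Icc.mpr ⟨h0, h1⟩) h0
  simpa using h

lemma one_sub_cos_ub {t : ℝ} : 1 - Real.cos t ≤ t^2/2 := by
  have h2 : Real.sin (t/2) ^ 2 = 1/2 - Real.cos (2*(t/2))/2 := Real.sin_sq_eq_half_sub _
  have ht : 2*(t/2) = t := by ring
  rw [ht] at h2
  nlinarith [Real.sin_sq_le_sq (x := t/2)]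

lemma key_ineq {σ : ℝ} (h0 : 0 < σ) (h1 : σ ≤ π/2) :
    (1 - Real.cos σ) * Real.sin σ ≤ (15/2) * ((σ - Real.sin σ) * (1 + Real.cos σ)) := by
  have hπ := Real.pi_pos
  have hπ2 : π^2 ≤ 10 := by nlinarith [Real.pi_lt_d2]
  have h3 := sub_sin_lb h0.le h1
  have h4 : (0:ℝ) ≤ 1 + Real.cos σ := by nlinarith [Real.neg_one_le_cos σ]
  have h5 : Real.cos σ ≥ 0 := Real.cos_nonneg_of_mem_Icc ⟨by linarith, h1⟩
  have h6 : Real.sin σ ≤ σ := Real.sin_le h0.le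
  have h7 : 0 ≤ Real.sin σ := Real.sin_nonneg_of_nonneg_of_le_pi h0.le (by linarith)
  have h8 := one_sub_cos_ub (t := σ)
  have h9 : (1 - Real.cos σ) * Real.sin σ ≤ σ^2/2 * σ :=
    mul_le_mul h8 h6 h7 (by positivity)
  have h10 : (15/2) * (2/(3*π^2) * σ^3 * 1) ≤ (15/2) * ((σ - Real.sin σ) * (1 + Real.cos σ)) := by
    apply mul_le_mul_of_nonneg_left _ (by norm_num)
    apply mul_le_mul h3 (by linarith) (by norm_num) (by linarith)
  have he : (15/2) * (2/(3*π^2) * σ^3 * 1) = 5/π^2 * σ^3 := by field_simp; ring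
  have hp2 : (0:ℝ) < π^2 := by positivity
  have h12 : σ^3/2 ≤ 5/π^2 * σ^3 := by
    rw [div_mul_eq_mul_div, le_div_iff₀ hp2]
    nlinarith [pow_pos h0 3]
  have h13 : σ^2/2*σ = σ^3/2 := by ring
  linarith

lemma nodal_id (l A B a b x : ℝ) :
    (A*Real.sin (l*a)+B*Real.cos (l*a)) * Real.sin (l*(b-x))
      + (A*Real.sin (l*b)+B*Real.cos (l*b)) * Real.sin (l*(x-a))
    = Real.sin (l*(b-a)) * (A*Real.sin (l*x)+B*Real.cos (l*x)) := by
  simp only [mul_sub, Real.sin_sub]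
  ring

lemma sin_add_sin_le {a b : ℝ} (ha : 0 ≤ a) (hb : 0 ≤ b) (hab : a + b ≤ π/2) :
    Real.sin a + Real.sin b ≤ 2 * Real.sin (a+b) := by
  have hπ := Real.pi_pos
  have h1 : Real.sin a + Real.sin b = 2 * Real.sin ((a+b)/2) * Real.cos ((a-b)/2) := by
    have e1 : Real.sin a = Real.sin ((a+b)/2 + (a-b)/2) := by ring_nf
    have e2 : Real.sin b = Real.sin ((a+b)/2 - (a-b)/2) := by ring_nf
    rw [e1, e2, Real.sin_add, Real.sin_sub]
    ring
  have h2 : Real.sin (a+b) = 2 * Real.sin ((a+b)/2) * Real.cos ((a+b)/2) := by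
    rw [show a + b = 2*((a+b)/2) by ring, Real.sin_two_mul]
    ring_nf
  have hs : 0 ≤ Real.sin ((a+b)/2) :=
    Real.sin_nonneg_of_nonneg_of_le_pi (by linarith) (by linarith)
  have hc1 : Real.cos ((a-b)/2) ≤ 1 := Real.cos_le_one _
  have hc2 : Real.cos (π/4) ≤ Real.cos ((a+b)/2) := by
    apply Real.cos_le_cos_of_nonneg_of_le_pi (by linarith) (by linarith) (by linarith)
  have hc3 : (1:ℝ)/2 ≤ Real.cos (π/4) := by
    rw [Real.cos_pi_div_four]
    nlinarith [Real.sq_sqrt (by norm_num : (2:ℝ) ≥ 0), Real.sqrt_nonneg 2]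
  nlinarith

lemma t_mono {n : ℕ} {t : ℕ → ℝ} (ht : ∀ i < n, t i < t (i+1)) :
    ∀ i j, i ≤ j → j ≤ n → t i ≤ t j := by
  intro i j hij hjn
  induction j with
  | zero => simp_all
  | succ m ih =>
    rcases Nat.lt_or_ge i (m+1) with h | h
    · have h1 : t i ≤ t m := ih (Nat.lt_succ_iff.mp h) (by omega)
      have h2 : t m < t (m+1) := ht m (by omega)
      linarith
    · have : i = m + 1 := le_antisymm hij h
      simp [this]

lemma locate {n : ℕ} {t : ℕ → ℝ} {x : ℝ} (h1 : 1 ≤ n)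
    (hx : t 0 ≤ x) (hx2 : x ≤ t n) :
    ∃ k, k < n ∧ t k ≤ x ∧ x ≤ t (k+1) := by
  induction n with
  | zero => omega
  | succ m ih =>
    rcases Nat.eq_or_lt_of_le h1 with h | h
    · exact ⟨0, by omega, hx, by rw [← h] at hx2; exact hx2⟩
    · rcases le_or_gt x (t m) with hxm | hxm
      · obtain ⟨k, hk, hk1, hk2⟩ := ih (by omega) hxm
        exact ⟨k, by omega, hk1, hk2⟩
      · exact ⟨m, by omega, hxm.le, hx2⟩

lemma argmax_node {n : ℕ} (c : ℕ → ℝ) :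
    ∃ i ≤ n, ∀ j ≤ n, |c j| ≤ |c i| := by
  obtain ⟨i, hi, hmax⟩ := Finset.exists_max_image (Finset.range (n+1)) (fun j => |c j|)
    ⟨0, Finset.mem_range.mpr (by omega)⟩
  exact ⟨i, Nat.lt_succ_iff.mp (Finset.mem_range.mp hi),
    fun j hj => hmax j (Finset.mem_range.mpr (by omega))⟩

lemma amp_bound (A B x : ℝ) : (A * Real.sin x + B * Real.cos x)^2 ≤ A^2 + B^2 := by
  nlinarith [sq_nonneg (A * Real.cos x - B * Real.sin x), Real.sin_sq_add_cos_sq x]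

lemma alg1 (X Y Ds Dc R2 : ℝ) (hX : X^2 + Y^2 = R2^2) (hR2 : 0 ≤ R2)
    (hd : Ds^2 + Dc^2 ≤ 4) : X*Ds + Y*Dc ≤ 2*R2 := by
  have h1 : (X*Ds + Y*Dc)^2 ≤ R2^2 * (Ds^2+Dc^2) := by
    nlinarith [sq_nonneg (X*Dc - Y*Ds)]
  nlinarith [sq_nonneg (X*Ds + Y*Dc - 2*R2), sq_nonneg (X*Ds + Y*Dc + 2*R2), sq_nonneg R2]

lemma alg2 (Su Cu Ss Cs : ℝ) (p1 : Su^2+Cu^2 = 1) (p2 : Ss^2+Cs^2 = 1) :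
    (Su-Ss)^2 + (Cu-Cs)^2 ≤ 4 := by
  nlinarith [sq_nonneg (Su*Ss + Cu*Cs + 1), sq_nonneg (Su*Cs - Cu*Ss)]

lemma caseA {l : ℝ} (hl : 0 < l) {A B s u : ℝ} (hsu : π/2 ≤ l*(u-s))
    (hp2 : (∫ x in s..u, (A * Real.sin (l*x) + B * Real.cos (l*x))^2) ≤ π/l) :
    ∀ x : ℝ, |A * Real.sin (l*x) + B * Real.cos (l*x)| ≤ 4 := by
  intro x
  have hπ := Real.pi_pos
  have hπ3 : (3:ℝ) ≤ π := by linarith [Real.pi_gt_three]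
  have hπ4 : π ≤ 4 := by linarith [Real.pi_lt_d2]
  have hd2 := alg2 _ _ _ _ (Real.sin_sq_add_cos_sq (2*(l*u))) (Real.sin_sq_add_cos_sq (2*(l*s)))
  have hbr := alg1 (A^2-B^2) (2*A*B)
    (Real.sin (2*(l*u)) - Real.sin (2*(l*s))) (Real.cos (2*(l*u)) - Real.cos (2*(l*s)))
    (A^2+B^2) (by ring) (by positivity) hd2
  have hint := intPsq hl A B s u
  have hlow : (A^2+B^2) * (u-s)/2 - 2*(A^2+B^2)/(4*l) ≤ π/l := by
    rw [hint] at hp2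
    have hq := (div_le_div_iff_of_pos_right (by positivity : (0:ℝ) < 4*l)).mpr hbr
    linarith
  have hR2nn : (0:ℝ) ≤ A^2+B^2 := by positivity
  have h2 : (A^2+B^2) * (l*(u-s)) - (A^2+B^2) ≤ 2*π := by
    have h3 := mul_le_mul_of_nonneg_right hlow (by positivity : (0:ℝ) ≤ 2*l)
    have e : ((A^2+B^2) * (u - s) / 2 - 2*(A^2+B^2)/(4*l)) * (2*l)
        = (A^2+B^2)*(l*(u-s)) - (A^2+B^2) := by field_simp; ring
    have e2 : (π/l)*(2*l) = 2*π := by field_simp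
    rw [e, e2] at h3
    exact h3
  have hσ : (3:ℝ)/2 ≤ l*(u-s) := by linarith
  have hmm : (A^2+B^2) * (3/2) ≤ (A^2+B^2) * (l*(u-s)) := mul_le_mul_of_nonneg_left hσ hR2nn
  have hR16 : A^2+B^2 ≤ 16 := by linarith
  have hamp := amp_bound A B (l*x)
  have h4 : (A * Real.sin (l*x) + B * Real.cos (l*x))^2 ≤ 16 := by linarith
  linarith [sq_abs (A * Real.sin (l*x) + B * Real.cos (l*x)),
    sq_nonneg (|A * Real.sin (l*x) + B * Real.cos (l*x)| - 4)]

noncomputable section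

def hatM (l a b c' : ℝ) : ℝ → ℝ := fun x =>
  if x ≤ a then 0 else if x ≤ b then Real.sin (l*(x-a))/Real.sin (l*(b-a))
  else if x ≤ c' then Real.sin (l*(c'-x))/Real.sin (l*(c'-b)) else 0

def hatL (l a b : ℝ) : ℝ → ℝ := fun x =>
  if x ≤ b then Real.sin (l*(b-x))/Real.sin (l*(b-a)) else 0

def hatR (l a b : ℝ) : ℝ → ℝ := fun x =>
  if x ≤ a then 0 else Real.sin (l*(x-a))/Real.sin (l*(b-a))

variable {l : ℝ}

lemma hatM_continuous (hl : 0 < l) {a b c' : ℝ} (hab : a < b) (hbc : b < c')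
    (h1 : 0 < Real.sin (l*(b-a))) (h2 : 0 < Real.sin (l*(c'-b))) :
    Continuous (hatM l a b c') := by
  have cf1 : Continuous (fun x => Real.sin (l*(x-a))/Real.sin (l*(b-a))) := by fun_prop
  have cf2 : Continuous (fun x => Real.sin (l*(c'-x))/Real.sin (l*(c'-b))) := by fun_prop
  have cM : Continuous (fun x => if x ≤ c' then Real.sin (l*(c'-x))/Real.sin (l*(c'-b)) else 0) := by
    apply Continuous.if_le cf2 continuous_const continuous_id continuous_const
    intro x hx
    simp only [id_eq] at hx
    rw [hx]
    simp [sub_self]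
  have cN : Continuous (fun x => if x ≤ b then Real.sin (l*(x-a))/Real.sin (l*(b-a))
      else if x ≤ c' then Real.sin (l*(c'-x))/Real.sin (l*(c'-b)) else 0) := by
    apply Continuous.if_le cf1 cM continuous_id continuous_const
    intro x hx
    simp only [id_eq] at hx
    rw [hx, if_pos hbc.le, div_self h1.ne', div_self h2.ne']
  unfold hatM
  apply Continuous.if_le continuous_const cN continuous_id continuous_const
  intro x hx
  simp only [id_eq] at hx
  rw [hx, if_pos hab.le]
  simp [sub_self]

lemma hatL_continuous {a b : ℝ} : Continuous (hatL l a b) := by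
  unfold hatL
  apply Continuous.if_le (by fun_prop) continuous_const continuous_id continuous_const
  intro x hx
  simp only [id_eq] at hx
  rw [hx]
  simp [sub_self]

lemma hatR_continuous {a b : ℝ} : Continuous (hatR l a b) := by
  unfold hatR
  apply Continuous.if_le continuous_const (by fun_prop) continuous_id continuous_const
  intro x hx
  simp only [id_eq] at hx
  rw [hx]
  simp [sub_self]

lemma hatM_nonneg (hl : 0 < l) {a b c' : ℝ} (hab : a < b) (hbc : b < c')
    (hπ1 : l*(b-a) ≤ π) (hπ2 : l*(c'-b) ≤ π)
    (h1 : 0 < Real.sin (l*(b-a))) (h2 : 0 < Real.sin (l*(c'-b))) (x : ℝ) :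
    0 ≤ hatM l a b c' x := by
  unfold hatM
  split_ifs with e1 e2 e3
  · exact le_rfl
  · push_neg at e1
    apply div_nonneg _ h1.le
    apply Real.sin_nonneg_of_nonneg_of_le_pi (by nlinarith) (by nlinarith)
  · push_neg at e1 e2
    apply div_nonneg _ h2.le
    apply Real.sin_nonneg_of_nonneg_of_le_pi (by nlinarith) (by nlinarith)
  · exact le_rfl

lemma hatL_nonneg (hl : 0 < l) {a b : ℝ} (hab : a ≤ b) (hπ1 : l*(b-a) ≤ π)
    (h1 : 0 < Real.sin (l*(b-a))) {x : ℝ} (hx : a ≤ x) :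
    0 ≤ hatL l a b x := by
  unfold hatL
  split_ifs with e1
  · apply div_nonneg _ h1.le
    apply Real.sin_nonneg_of_nonneg_of_le_pi (by nlinarith) (by nlinarith)
  · exact le_rfl

lemma hatR_nonneg (hl : 0 < l) {a b : ℝ} (hab : a ≤ b) (hπ1 : l*(b-a) ≤ π)
    (h1 : 0 < Real.sin (l*(b-a))) {x : ℝ} (hx : x ≤ b) :
    0 ≤ hatR l a b x := by
  unfold hatR
  split_ifs with e1
  · exact le_rfl
  · push_neg at e1
    apply div_nonneg _ h1.le
    apply Real.sin_nonneg_of_nonneg_of_le_pi (by nlinarith) (by nlinarith)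

end
noncomputable section
variable {l : ℝ}

lemma hatM_eq_left {a b c' : ℝ} (hab : a < b) {x : ℝ} (hx : x ∈ Set.Icc a b) :
    hatM l a b c' x = Real.sin (l*(x-a))/Real.sin (l*(b-a)) := by
  unfold hatM
  by_cases e1 : x ≤ a
  · have : x = a := le_antisymm e1 hx.1
    rw [if_pos e1, this]
    simp [sub_self]
  · rw [if_neg e1, if_pos hx.2]

lemma hatM_eq_right {a b c' : ℝ} (hab : a < b) (hbc : b < c')
    (h1 : 0 < Real.sin (l*(b-a))) (h2 : 0 < Real.sin (l*(c'-b)))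
    {x : ℝ} (hx : x ∈ Set.Icc b c') :
    hatM l a b c' x = Real.sin (l*(c'-x))/Real.sin (l*(c'-b)) := by
  unfold hatM
  rw [if_neg (by linarith [hx.1] : ¬ x ≤ a)]
  by_cases e2 : x ≤ b
  · have hxb : x = b := le_antisymm e2 hx.1
    rw [if_pos e2, hxb, div_self h1.ne', div_self h2.ne']
  · rw [if_neg e2, if_pos hx.2]

lemma hatM_eq_zero_left {a b c' : ℝ} {x : ℝ} (hx : x ≤ a) :
    hatM l a b c' x = 0 := by
  unfold hatM; rw [if_pos hx]

lemma hatM_eq_zero_right {a b c' : ℝ} (hab : a < b) (hbc : b < c') {x : ℝ} (hx : c' ≤ x) :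
    hatM l a b c' x = 0 := by
  unfold hatM
  rw [if_neg (by linarith : ¬ x ≤ a), if_neg (by linarith : ¬ x ≤ b)]
  by_cases e3 : x ≤ c'
  · have : x = c' := le_antisymm e3 hx
    rw [if_pos e3, this]
    simp [sub_self]
  · rw [if_neg e3]

lemma trig_form {a s1 : ℝ} (hs1 : s1 ≠ 0) :
    ∃ A B : ℝ, ∀ x : ℝ, Real.sin (l*(x-a))/s1 = A * Real.sin (l*x) + B * Real.cos (l*x) := by
  refine ⟨Real.cos (l*a)/s1, -(Real.sin (l*a)/s1), fun x => ?_⟩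
  rw [mul_sub, Real.sin_sub]
  field_simp
  ring

lemma trig_form' {b s1 : ℝ} (hs1 : s1 ≠ 0) :
    ∃ A B : ℝ, ∀ x : ℝ, Real.sin (l*(b-x))/s1 = A * Real.sin (l*x) + B * Real.cos (l*x) := by
  refine ⟨-(Real.cos (l*b)/s1), Real.sin (l*b)/s1, fun x => ?_⟩
  rw [mul_sub, Real.sin_sub]
  field_simp
  ring

lemma hatM_spline (hl : 0 < l) {n : ℕ} {t : ℕ → ℝ} (ht : ∀ i < n, t i < t (i+1))
    {i : ℕ} (hi1 : 1 ≤ i) (hin : i < n)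
    (h1 : 0 < Real.sin (l*(t i - t (i-1)))) (h2 : 0 < Real.sin (l*(t (i+1) - t i))) :
    IsTrigSpline l n t (hatM l (t (i-1)) (t i) (t (i+1))) := by
  have hii : i - 1 + 1 = i := by omega
  have hab : t (i-1) < t i := by
    have := ht (i-1) (by omega); rwa [hii] at this
  have hbc : t i < t (i+1) := ht i hin
  constructor
  · exact (hatM_continuous hl hab hbc h1 h2).continuousOn
  · intro k hk
    by_cases hk1 : k + 1 ≤ i - 1
    · refine ⟨0, 0, fun x hx => ?_⟩
      rw [hatM_eq_zero_left (hx.2.trans (t_mono ht (k+1) (i-1) hk1 (by omega)))]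
      ring
    · by_cases hk2 : k = i - 1
      · subst hk2
        obtain ⟨A, B, hAB⟩ := trig_form (l := l) (a := t (i-1)) h1.ne'
        refine ⟨A, B, fun x hx => ?_⟩
        rw [hii] at hx
        rw [hatM_eq_left hab hx, hAB]
      · by_cases hk3 : k = i
        · subst hk3
          obtain ⟨A, B, hAB⟩ := trig_form' (l := l) (b := t (k+1)) h2.ne'
          refine ⟨A, B, fun x hx => ?_⟩
          rw [hatM_eq_right hab hbc h1 h2 hx, hAB]
        · have hk4 : i + 1 ≤ k := by omega
          refine ⟨0, 0, fun x hx => ?_⟩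
          rw [hatM_eq_zero_right hab hbc ((t_mono ht (i+1) k hk4 (by omega)).trans hx.1)]
          ring


lemma hatL_eq {a b : ℝ} {x : ℝ} (hx : x ≤ b) :
    hatL l a b x = Real.sin (l*(b-x))/Real.sin (l*(b-a)) := by
  unfold hatL; rw [if_pos hx]

lemma hatL_eq_zero {a b : ℝ} {x : ℝ} (hx : b ≤ x) :
    hatL l a b x = 0 := by
  unfold hatL
  by_cases e : x ≤ b
  · have : x = b := le_antisymm e hx
    rw [if_pos e, this]
    simp [sub_self]
  · rw [if_neg e]

lemma hatR_eq {a b : ℝ} {x : ℝ} (hx : a ≤ x) :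
    hatR l a b x = Real.sin (l*(x-a))/Real.sin (l*(b-a)) := by
  unfold hatR
  by_cases e : x ≤ a
  · have : x = a := le_antisymm e hx
    rw [if_pos e, this]
    simp [sub_self]
  · rw [if_neg e]

lemma hatR_eq_zero {a b : ℝ} {x : ℝ} (hx : x ≤ a) :
    hatR l a b x = 0 := by
  unfold hatR; rw [if_pos hx]

lemma hatL_spline (hl : 0 < l) {n : ℕ} {t : ℕ → ℝ} (ht : ∀ i < n, t i < t (i+1))
    (hn : 1 ≤ n) (h1 : 0 < Real.sin (l*(t 1 - t 0))) :
    IsTrigSpline l n t (hatL l (t 0) (t 1)) := by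
  constructor
  · exact hatL_continuous.continuousOn
  · intro k hk
    by_cases hk0 : k = 0
    · subst hk0
      obtain ⟨A, B, hAB⟩ := trig_form' (l := l) (b := t 1) h1.ne'
      exact ⟨A, B, fun x hx => by rw [hatL_eq hx.2, hAB]⟩
    · refine ⟨0, 0, fun x hx => ?_⟩
      rw [hatL_eq_zero ((t_mono ht 1 k (by omega) (by omega)).trans hx.1)]
      ring

lemma hatR_spline (hl : 0 < l) {n : ℕ} {t : ℕ → ℝ} (ht : ∀ i < n, t i < t (i+1))
    (hn : 1 ≤ n) (h1 : 0 < Real.sin (l*(t n - t (n-1)))) :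
    IsTrigSpline l n t (hatR l (t (n-1)) (t n)) := by
  have hnn : n - 1 + 1 = n := by omega
  constructor
  · exact hatR_continuous.continuousOn
  · intro k hk
    by_cases hk0 : k = n - 1
    · subst hk0
      obtain ⟨A, B, hAB⟩ := trig_form (l := l) (a := t (n-1)) h1.ne'
      exact ⟨A, B, fun x hx => by rw [hatR_eq hx.1, hAB]⟩
    · refine ⟨0, 0, fun x hx => ?_⟩
      rw [hatR_eq_zero (hx.2.trans (t_mono ht (k+1) (n-1) (by omega) (by omega)))]
      ring

lemma zero_piece {P G : ℝ → ℝ} {a b : ℝ} (hab : a ≤ b)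
    (hG : ∀ x ∈ Set.Icc a b, G x = 0) :
    ∫ x in a..b, P x * G x = 0 := by
  rw [intervalIntegral.integral_congr (g := fun _ => (0:ℝ))]
  · simp
  · intro x hx
    rw [Set.uIcc_of_le hab] at hx
    simp [hG x hx]

lemma int_piece_left (hl : 0 < l) {a b : ℝ} (hσpos : 0 < l*(b-a)) (hσπ : l*(b-a) < π)
    {P G : ℝ → ℝ} (ca cb : ℝ)
    (hP : ∀ x ∈ Set.Icc a b, Real.sin (l*(b-a)) * P x
        = ca * Real.sin (l*(b-x)) + cb * Real.sin (l*(x-a)))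
    (hG : ∀ x ∈ Set.Icc a b, Real.sin (l*(b-a)) * G x = Real.sin (l*(x-a))) :
    ∫ x in a..b, P x * G x
      = (ca * ((Real.sin (l*(b-a)) - l*(b-a) * Real.cos (l*(b-a)))/(2*l))
        + cb * ((l*(b-a) - Real.sin (l*(b-a)) * Real.cos (l*(b-a)))/(2*l)))
        / (Real.sin (l*(b-a)))^2 := by
  have hs : 0 < Real.sin (l*(b-a)) := Real.sin_pos_of_pos_of_lt_pi hσpos hσπ
  have hab : a ≤ b := by nlinarith
  rw [intervalIntegral.integral_congr (g := fun x =>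
      (ca/(Real.sin (l*(b-a)))^2) * (Real.sin (l*(b-x)) * Real.sin (l*(x-a)))
      + (cb/(Real.sin (l*(b-a)))^2) * (Real.sin (l*(x-a)))^2)]
  · rw [intervalIntegral.integral_add
      ((Continuous.intervalIntegrable (by fun_prop) _ _))
      ((Continuous.intervalIntegrable (by fun_prop) _ _)),
      intervalIntegral.integral_const_mul, intervalIntegral.integral_const_mul,
      intJ3 hl, intJ2 hl]
    field_simp
  · intro x hx
    rw [Set.uIcc_of_le hab] at hx
    have e1 : P x = (ca * Real.sin (l*(b-x)) + cb * Real.sin (l*(x-a)))/Real.sin (l*(b-a)) := by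
      rw [eq_div_iff hs.ne']
      linarith [hP x hx]
    have e2 : G x = Real.sin (l*(x-a))/Real.sin (l*(b-a)) := by
      rw [eq_div_iff hs.ne']
      linarith [hG x hx]
    simp only [e1, e2]
    field_simp

lemma int_piece_right (hl : 0 < l) {a b : ℝ} (hσpos : 0 < l*(b-a)) (hσπ : l*(b-a) < π)
    {P G : ℝ → ℝ} (ca cb : ℝ)
    (hP : ∀ x ∈ Set.Icc a b, Real.sin (l*(b-a)) * P x
        = ca * Real.sin (l*(b-x)) + cb * Real.sin (l*(x-a)))
    (hG : ∀ x ∈ Set.Icc a b, Real.sin (l*(b-a)) * G x = Real.sin (l*(b-x))) :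
    ∫ x in a..b, P x * G x
      = (ca * ((l*(b-a) - Real.sin (l*(b-a)) * Real.cos (l*(b-a)))/(2*l))
        + cb * ((Real.sin (l*(b-a)) - l*(b-a) * Real.cos (l*(b-a)))/(2*l)))
        / (Real.sin (l*(b-a)))^2 := by
  have hs : 0 < Real.sin (l*(b-a)) := Real.sin_pos_of_pos_of_lt_pi hσpos hσπ
  have hab : a ≤ b := by nlinarith
  rw [intervalIntegral.integral_congr (g := fun x =>
      (ca/(Real.sin (l*(b-a)))^2) * (Real.sin (l*(b-x)))^2
      + (cb/(Real.sin (l*(b-a)))^2) * (Real.sin (l*(b-x)) * Real.sin (l*(x-a))))]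
  · rw [intervalIntegral.integral_add
      ((Continuous.intervalIntegrable (by fun_prop) _ _))
      ((Continuous.intervalIntegrable (by fun_prop) _ _)),
      intervalIntegral.integral_const_mul, intervalIntegral.integral_const_mul,
      intJ3 hl, intJ2' hl]
    field_simp
  · intro x hx
    rw [Set.uIcc_of_le hab] at hx
    have e1 : P x = (ca * Real.sin (l*(b-x)) + cb * Real.sin (l*(x-a)))/Real.sin (l*(b-a)) := by
      rw [eq_div_iff hs.ne']
      linarith [hP x hx]
    have e2 : G x = Real.sin (l*(b-x))/Real.sin (l*(b-a)) := by
      rw [eq_div_iff hs.ne']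
      linarith [hG x hx]
    simp only [e1, e2]
    field_simp

lemma int_G_left (hl : 0 < l) {a b : ℝ} (hσpos : 0 < l*(b-a)) (hσπ : l*(b-a) < π)
    {G : ℝ → ℝ}
    (hG : ∀ x ∈ Set.Icc a b, Real.sin (l*(b-a)) * G x = Real.sin (l*(x-a))) :
    ∫ x in a..b, G x = (1 - Real.cos (l*(b-a)))/(l * Real.sin (l*(b-a))) := by
  have hs : 0 < Real.sin (l*(b-a)) := Real.sin_pos_of_pos_of_lt_pi hσpos hσπ
  have hab : a ≤ b := by nlinarith
  rw [intervalIntegral.integral_congr (g := fun x =>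
      (1/Real.sin (l*(b-a))) * Real.sin (l*(x-a)))]
  · rw [intervalIntegral.integral_const_mul, intJ1 hl]
    field_simp
  · intro x hx
    rw [Set.uIcc_of_le hab] at hx
    simp only [show G x = Real.sin (l*(x-a))/Real.sin (l*(b-a)) by
      rw [eq_div_iff hs.ne']; linarith [hG x hx]]
    field_simp

lemma int_G_right (hl : 0 < l) {a b : ℝ} (hσpos : 0 < l*(b-a)) (hσπ : l*(b-a) < π)
    {G : ℝ → ℝ}
    (hG : ∀ x ∈ Set.Icc a b, Real.sin (l*(b-a)) * G x = Real.sin (l*(b-x))) :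
    ∫ x in a..b, G x = (1 - Real.cos (l*(b-a)))/(l * Real.sin (l*(b-a))) := by
  have hs : 0 < Real.sin (l*(b-a)) := Real.sin_pos_of_pos_of_lt_pi hσpos hσπ
  have hab : a ≤ b := by nlinarith
  rw [intervalIntegral.integral_congr (g := fun x =>
      (1/Real.sin (l*(b-a))) * Real.sin (l*(b-x)))]
  · rw [intervalIntegral.integral_const_mul, intJ1' hl]
    field_simp
  · intro x hx
    rw [Set.uIcc_of_le hab] at hx
    simp only [show G x = Real.sin (l*(b-x))/Real.sin (l*(b-a)) by
      rw [eq_div_iff hs.ne']; linarith [hG x hx]]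
    field_simp

end

lemma row_combine1 (ca cb A B r m : ℝ) (hrow : cb*A + ca*B = r) (hr : |r| ≤ m)
    (hB : 0 ≤ B) (hD : 0 < A - B) (hm : m ≤ 15*(A-B)) (hca : |ca| ≤ |cb|) :
    |cb| ≤ 15 := by
  obtain ⟨hr1, hr2⟩ := abs_le.mp hr
  have hca1 := neg_abs_le ca
  have hca2 := le_abs_self ca
  have habs : |cb| * A - |cb| * B ≤ m := by
    rcases abs_cases cb with ⟨h, _⟩ | ⟨h, _⟩
    · nlinarith
    · nlinarith
  have hS : 0 < A - B := hD
  nlinarith [abs_nonneg cb]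

lemma row_combine (ca cb cc A1 A2 B1 B2 r m1 m2 : ℝ)
    (hrow : (ca*B1 + cb*A1) + (cb*A2 + cc*B2) = r)
    (hr : |r| ≤ m1 + m2)
    (hB1 : 0 ≤ B1) (hB2 : 0 ≤ B2)
    (hD1 : 0 < A1 - B1) (hD2 : 0 < A2 - B2)
    (hm1 : m1 ≤ 15*(A1-B1)) (hm2 : m2 ≤ 15*(A2-B2))
    (hca : |ca| ≤ |cb|) (hcc : |cc| ≤ |cb|) : |cb| ≤ 15 := by
  obtain ⟨hr1, hr2⟩ := abs_le.mp hr
  have hca1 := neg_abs_le ca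
  have hca2 := le_abs_self ca
  have hcc1 := neg_abs_le cc
  have hcc2 := le_abs_self cc
  have habs : |cb| * (A1+A2) - |cb| * (B1+B2) ≤ m1 + m2 := by
    rcases abs_cases cb with ⟨h, _⟩ | ⟨h, _⟩
    · nlinarith
    · nlinarith
  nlinarith [abs_nonneg cb]

lemma grams (hl : 0 < (l:ℝ)) {σ : ℝ} (h0 : 0 < σ) (h2 : σ ≤ π/2) :
    0 ≤ ((Real.sin σ - σ * Real.cos σ)/(2*l)) / (Real.sin σ)^2
    ∧ 0 < ((σ - Real.sin σ * Real.cos σ)/(2*l)) / (Real.sin σ)^2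
        - ((Real.sin σ - σ * Real.cos σ)/(2*l)) / (Real.sin σ)^2
    ∧ (1 - Real.cos σ)/(l * Real.sin σ)
        ≤ 15*(((σ - Real.sin σ * Real.cos σ)/(2*l)) / (Real.sin σ)^2
          - ((Real.sin σ - σ * Real.cos σ)/(2*l)) / (Real.sin σ)^2) := by
  have hπ := Real.pi_pos
  have hs : 0 < Real.sin σ := Real.sin_pos_of_pos_of_lt_pi h0 (by linarith)
  have hc : 0 ≤ Real.cos σ := Real.cos_nonneg_of_mem_Icc ⟨by linarith, h2⟩
  have hJ3 : 0 ≤ Real.sin σ - σ * Real.cos σ := sin_sub_mul_cos_nonneg h0.le h2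
  have hsl : Real.sin σ < σ := Real.sin_lt h0
  have hdiff : ((σ - Real.sin σ * Real.cos σ)/(2*l)) / (Real.sin σ)^2
      - ((Real.sin σ - σ * Real.cos σ)/(2*l)) / (Real.sin σ)^2
      = (σ - Real.sin σ)*(1 + Real.cos σ)/(2*l*(Real.sin σ)^2) := by
    field_simp
    ring
  refine ⟨by positivity, ?_, ?_⟩
  · rw [hdiff]
    have : 0 < (σ - Real.sin σ)*(1 + Real.cos σ) := by nlinarith
    positivity
  · rw [hdiff]
    have hk := key_ineq h0 h2
    have e : 15 * ((σ - Real.sin σ) * (1 + Real.cos σ) / (2*l*(Real.sin σ)^2))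
        = ((15/2) * ((σ - Real.sin σ) * (1 + Real.cos σ))) / (l * (Real.sin σ)^2) := by
      field_simp
    rw [e, div_le_div_iff₀ (by positivity) (by positivity)]
    nlinarith [mul_le_mul_of_nonneg_right hk (by positivity : (0:ℝ) ≤ l * Real.sin σ)]

open intervalIntegral in
lemma split_int {n : ℕ} {t : ℕ → ℝ} (ht : ∀ i < n, t i < t (i+1)) {g : ℝ → ℝ}
    (hg : ContinuousOn g (Set.Icc (t 0) (t n))) :
    ∫ x in (t 0)..(t n), g x = ∑ k ∈ Finset.range n, ∫ x in (t k)..(t (k+1)), g x := by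
  refine (intervalIntegral.sum_integral_adjacent_intervals (fun k hk => ?_)).symm
  apply ContinuousOn.intervalIntegrable
  rw [Set.uIcc_of_le (ht k hk).le]
  exact hg.mono (Set.Icc_subset_Icc (t_mono ht 0 k (by omega) (by omega))
    (t_mono ht (k+1) n (by omega) (by omega)))

lemma sum_one_spike {n i : ℕ} (hin : i < n) (F : ℕ → ℝ) (V : ℝ)
    (h : ∀ k < n, F k = if k = i then V else 0) :
    ∑ k ∈ Finset.range n, F k = V := by
  rw [Finset.sum_congr rfl (fun k hk => h k (Finset.mem_range.mp hk)),
    Finset.sum_ite_eq' (Finset.range n) i (fun _ => V)]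
  simp [Finset.mem_range.mpr hin]

lemma sum_two_spikes {n i j : ℕ} (hij : i < j) (hjn : j < n) (F : ℕ → ℝ) (V W : ℝ)
    (h : ∀ k < n, F k = if k = i then V else if k = j then W else 0) :
    ∑ k ∈ Finset.range n, F k = V + W := by
  have e : ∀ k, (if k = i then V else if k = j then W else 0)
      = (if k = i then V else 0) + (if k = j then W else 0) := by
    intro k
    split_ifs with h1 h2 <;> first | omega | ring
  rw [Finset.sum_congr rfl (fun k hk => (h k (Finset.mem_range.mp hk)).trans (e k)),
    Finset.sum_add_distrib, Finset.sum_ite_eq' (Finset.range n) i (fun _ => V),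
    Finset.sum_ite_eq' (Finset.range n) j (fun _ => W)]
  simp [Finset.mem_range.mpr hjn, Finset.mem_range.mpr (hij.trans hjn)]

lemma zero_pieceG {G : ℝ → ℝ} {a b : ℝ} (hab : a ≤ b)
    (hG : ∀ x ∈ Set.Icc a b, G x = 0) :
    ∫ x in a..b, G x = 0 := by
  rw [intervalIntegral.integral_congr (g := fun _ => (0:ℝ))]
  · simp
  · intro x hx
    rw [Set.uIcc_of_le hab] at hx
    simp [hG x hx]

lemma orth_split (hl : 0 < l) {n : ℕ} {t : ℕ → ℝ} (ht : ∀ i < n, t i < t (i+1)) (hn : 1 ≤ n)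
    (ht0 : t 0 = 0) (htn : t n = π/l)
    {f p H : ℝ → ℝ} (hf : ContinuousOn f (Set.Icc 0 (π/l)))
    (hfb : ∀ x ∈ Set.Icc 0 (π/l), |f x| ≤ 1)
    (hp1 : ContinuousOn p (Set.Icc (t 0) (t n)))
    (hH : Continuous H) (hH0 : ∀ x ∈ Set.Icc (t 0) (t n), 0 ≤ H x)
    (horthH : ip 0 (π/l) (fun x => f x - p x) H = 0) :
    |∫ x in (t 0)..(t n), p x * H x| ≤ ∫ x in (t 0)..(t n), H x := by
  have hIcc : Set.Icc (0:ℝ) (π/l) = Set.Icc (t 0) (t n) := by rw [ht0, htn]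
  have h0n : t 0 ≤ t n := t_mono ht 0 n (by omega) (by omega)
  have hf' : ContinuousOn f (Set.Icc (t 0) (t n)) := hIcc ▸ hf
  have hintf : IntervalIntegrable (fun x => f x * H x) MeasureTheory.volume (t 0) (t n) := by
    apply ContinuousOn.intervalIntegrable
    rw [Set.uIcc_of_le h0n]
    exact hf'.mul hH.continuousOn
  have hintp : IntervalIntegrable (fun x => p x * H x) MeasureTheory.volume (t 0) (t n) := by
    apply ContinuousOn.intervalIntegrable
    rw [Set.uIcc_of_le h0n]
    exact hp1.mul hH.continuousOn
  have hintH : IntervalIntegrable H MeasureTheory.volume (t 0) (t n) :=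
    hH.intervalIntegrable _ _
  have horth2 : ∫ x in (t 0)..(t n), (f x - p x) * H x = 0 := by
    rw [ht0, htn]
    exact horthH
  have e : (fun x => (f x - p x) * H x) = fun x => f x * H x - p x * H x :=
    funext fun x => by ring
  rw [e, intervalIntegral.integral_sub hintf hintp] at horth2
  have hEq : (∫ x in (t 0)..(t n), p x * H x) = ∫ x in (t 0)..(t n), f x * H x := by linarith
  rw [hEq]
  have hub : ∀ x ∈ Set.Icc (t 0) (t n), f x * H x ≤ H x := by
    intro x hx
    have hfx : |f x| ≤ 1 := hfb x (hIcc ▸ hx)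
    have := mul_le_mul_of_nonneg_right ((le_abs_self (f x)).trans hfx) (hH0 x hx)
    linarith
  have hlb : ∀ x ∈ Set.Icc (t 0) (t n), -(H x) ≤ f x * H x := by
    intro x hx
    have hfx : |f x| ≤ 1 := hfb x (hIcc ▸ hx)
    have := mul_le_mul_of_nonneg_right ((neg_abs_le (f x)).trans_eq' (by rfl)) (hH0 x hx)
    nlinarith [hH0 x hx, abs_nonneg (f x), neg_abs_le (f x)]
  rw [abs_le]
  constructor
  · rw [← intervalIntegral.integral_neg]
    apply intervalIntegral.integral_mono_on h0n hintH.neg hintf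
    intro x hx
    exact hlb x hx
  · apply intervalIntegral.integral_mono_on h0n hintf hintH
    intro x hx
    exact hub x hx

lemma nodal_piece {l : ℝ} {a b : ℝ} {p : ℝ → ℝ} (A B : ℝ)
    (hAB : ∀ x ∈ Set.Icc a b, p x = A*Real.sin (l*x) + B*Real.cos (l*x)) (hab : a ≤ b) :
    ∀ x ∈ Set.Icc a b, Real.sin (l*(b-a)) * p x
      = p a * Real.sin (l*(b-x)) + p b * Real.sin (l*(x-a)) := by
  intro x hx
  rw [hAB x hx, hAB a ⟨le_refl a, hab⟩, hAB b ⟨hab, le_refl b⟩]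
  exact (nodal_id l A B a b x).symm

lemma rowLeft {l : ℝ} (hl : 0 < l) {n : ℕ} {t : ℕ → ℝ} (ht : ∀ i < n, t i < t (i+1))
    (hn : 1 ≤ n) (ht0 : t 0 = 0) (htn : t n = π/l)
    {f p : ℝ → ℝ} (hf : ContinuousOn f (Set.Icc 0 (π/l)))
    (hfb : ∀ x ∈ Set.Icc 0 (π/l), |f x| ≤ 1)
    (hp : IsTrigSpline l n t p)
    (horth : ∀ s : ℝ → ℝ, IsTrigSpline l n t s → ip 0 (π/l) (fun x => f x - p x) s = 0)
    (hσ : l*(t 1 - t 0) ≤ π/2)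
    (hmax : |p (t 1)| ≤ |p (t 0)|) :
    |p (t 0)| ≤ 15 := by
  have hπ := Real.pi_pos
  have hab : t 0 < t 1 := ht 0 (by omega)
  have hσpos : 0 < l*(t 1 - t 0) := by nlinarith
  have hσπ : l*(t 1 - t 0) < π := by linarith
  have hs1 : 0 < Real.sin (l*(t 1 - t 0)) := Real.sin_pos_of_pos_of_lt_pi hσpos hσπ
  set H := hatL l (t 0) (t 1) with hH
  have hHc : Continuous H := hatL_continuous
  have hH0 : ∀ x ∈ Set.Icc (t 0) (t n), 0 ≤ H x := fun x hx =>
    hatL_nonneg hl hab.le hσπ.le hs1 hx.1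
  have key := orth_split hl ht hn ht0 htn hf hfb hp.1 hHc hH0
    (horth H (hatL_spline hl ht hn hs1))
  -- compute ∫ p·H
  have hG : ∀ x ∈ Set.Icc (t 0) (t 1), Real.sin (l*(t 1 - t 0)) * H x
      = Real.sin (l*(t 1 - x)) := by
    intro x hx
    rw [hH, hatL_eq hx.2]
    field_simp
  obtain ⟨A, B, hAB⟩ := hp.2 0 (by omega)
  have hP := nodal_piece A B hAB hab.le
  have piece0 := int_piece_right hl hσpos hσπ (p (t 0)) (p (t 1)) hP hG
  have hzero : ∀ k, 1 ≤ k → k < n → ∀ x ∈ Set.Icc (t k) (t (k+1)), H x = 0 := by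
    intro k hk1 hkn x hx
    exact hatL_eq_zero ((t_mono ht 1 k hk1 (by omega)).trans hx.1)
  have hpH : (∫ x in (t 0)..(t n), p x * H x)
      = (p (t 0) * ((l*(t 1 - t 0) - Real.sin (l*(t 1 - t 0)) * Real.cos (l*(t 1 - t 0)))/(2*l))
        + p (t 1) * ((Real.sin (l*(t 1 - t 0)) - l*(t 1 - t 0) * Real.cos (l*(t 1 - t 0)))/(2*l)))
        / (Real.sin (l*(t 1 - t 0)))^2 := by
    rw [split_int (g := fun x => p x * H x) ht (hp.1.mul hHc.continuousOn)]
    apply sum_one_spike (by omega : 0 < n)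
    intro k hk
    split_ifs with h0
    · subst h0
      exact piece0
    · exact zero_piece (ht k hk).le (hzero k (by omega) hk)
  have hHint : (∫ x in (t 0)..(t n), H x)
      = (1 - Real.cos (l*(t 1 - t 0)))/(l * Real.sin (l*(t 1 - t 0))) := by
    rw [split_int ht hHc.continuousOn]
    apply sum_one_spike (by omega : 0 < n)
    intro k hk
    split_ifs with h0
    · subst h0
      exact int_G_right hl hσpos hσπ hG
    · exact zero_pieceG (ht k hk).le (hzero k (by omega) hk)
  rw [hpH, hHint] at key
  obtain ⟨g1, g2, g3⟩ := grams hl hσpos hσ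
  apply row_combine1 (p (t 1)) (p (t 0))
    (((l*(t 1 - t 0) - Real.sin (l*(t 1 - t 0)) * Real.cos (l*(t 1 - t 0)))/(2*l))
      / (Real.sin (l*(t 1 - t 0)))^2)
    (((Real.sin (l*(t 1 - t 0)) - l*(t 1 - t 0) * Real.cos (l*(t 1 - t 0)))/(2*l))
      / (Real.sin (l*(t 1 - t 0)))^2)
    ((p (t 0) * ((l*(t 1 - t 0) - Real.sin (l*(t 1 - t 0)) * Real.cos (l*(t 1 - t 0)))/(2*l))
        + p (t 1) * ((Real.sin (l*(t 1 - t 0)) - l*(t 1 - t 0) * Real.cos (l*(t 1 - t 0)))/(2*l)))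
        / (Real.sin (l*(t 1 - t 0)))^2)
    ((1 - Real.cos (l*(t 1 - t 0)))/(l * Real.sin (l*(t 1 - t 0))))
    (by field_simp <;> ring) key g1 g2 g3 hmax

lemma rowRight {l : ℝ} (hl : 0 < l) {n : ℕ} {t : ℕ → ℝ} (ht : ∀ i < n, t i < t (i+1))
    (hn : 1 ≤ n) (ht0 : t 0 = 0) (htn : t n = π/l)
    {f p : ℝ → ℝ} (hf : ContinuousOn f (Set.Icc 0 (π/l)))
    (hfb : ∀ x ∈ Set.Icc 0 (π/l), |f x| ≤ 1)
    (hp : IsTrigSpline l n t p)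
    (horth : ∀ s : ℝ → ℝ, IsTrigSpline l n t s → ip 0 (π/l) (fun x => f x - p x) s = 0)
    (hσ : l*(t n - t (n-1)) ≤ π/2)
    (hmax : |p (t (n-1))| ≤ |p (t n)|) :
    |p (t n)| ≤ 15 := by
  have hπ := Real.pi_pos
  have hnn : n - 1 + 1 = n := by omega
  have hab : t (n-1) < t n := by have := ht (n-1) (by omega); rwa [hnn] at this
  have hσpos : 0 < l*(t n - t (n-1)) := by nlinarith
  have hσπ : l*(t n - t (n-1)) < π := by linarith
  have hs1 : 0 < Real.sin (l*(t n - t (n-1))) := Real.sin_pos_of_pos_of_lt_pi hσpos hσπ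
  set H := hatR l (t (n-1)) (t n) with hH
  have hHc : Continuous H := hatR_continuous
  have hH0 : ∀ x ∈ Set.Icc (t 0) (t n), 0 ≤ H x := fun x hx =>
    hatR_nonneg hl hab.le hσπ.le hs1 hx.2
  have key := orth_split hl ht hn ht0 htn hf hfb hp.1 hHc hH0
    (horth H (hatR_spline hl ht hn hs1))
  have hG : ∀ x ∈ Set.Icc (t (n-1)) (t n), Real.sin (l*(t n - t (n-1))) * H x
      = Real.sin (l*(x - t (n-1))) := by
    intro x hx
    rw [hH, hatR_eq hx.1]
    field_simp
  obtain ⟨A, B, hAB⟩ := hp.2 (n-1) (by omega)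
  rw [hnn] at hAB
  have hP := nodal_piece A B hAB hab.le
  have piece0 := int_piece_left hl hσpos hσπ (p (t (n-1))) (p (t n)) hP hG
  have hzero : ∀ k, k + 1 ≤ n - 1 → ∀ x ∈ Set.Icc (t k) (t (k+1)), H x = 0 := by
    intro k hk1 x hx
    exact hatR_eq_zero (hx.2.trans (t_mono ht (k+1) (n-1) hk1 (by omega)))
  have hpH : (∫ x in (t 0)..(t n), p x * H x)
      = (p (t (n-1)) * ((Real.sin (l*(t n - t (n-1))) - l*(t n - t (n-1)) * Real.cos (l*(t n - t (n-1))))/(2*l))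
        + p (t n) * ((l*(t n - t (n-1)) - Real.sin (l*(t n - t (n-1))) * Real.cos (l*(t n - t (n-1))))/(2*l)))
        / (Real.sin (l*(t n - t (n-1))))^2 := by
    rw [split_int (g := fun x => p x * H x) ht (hp.1.mul hHc.continuousOn)]
    apply sum_one_spike (by omega : n - 1 < n)
    intro k hk
    split_ifs with h0
    · subst h0
      rw [hnn]
      exact piece0
    · exact zero_piece (ht k hk).le (hzero k (by omega))
  have hHint : (∫ x in (t 0)..(t n), H x)
      = (1 - Real.cos (l*(t n - t (n-1))))/(l * Real.sin (l*(t n - t (n-1)))) := by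
    rw [split_int ht hHc.continuousOn]
    apply sum_one_spike (by omega : n - 1 < n)
    intro k hk
    split_ifs with h0
    · subst h0
      rw [hnn]
      exact int_G_left hl hσpos hσπ hG
    · exact zero_pieceG (ht k hk).le (hzero k (by omega))
  rw [hpH, hHint] at key
  obtain ⟨g1, g2, g3⟩ := grams hl hσpos hσ
  apply row_combine1 (p (t (n-1))) (p (t n))
    (((l*(t n - t (n-1)) - Real.sin (l*(t n - t (n-1))) * Real.cos (l*(t n - t (n-1))))/(2*l))
      / (Real.sin (l*(t n - t (n-1))))^2)
    (((Real.sin (l*(t n - t (n-1))) - l*(t n - t (n-1)) * Real.cos (l*(t n - t (n-1))))/(2*l))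
      / (Real.sin (l*(t n - t (n-1))))^2)
    ((p (t (n-1)) * ((Real.sin (l*(t n - t (n-1))) - l*(t n - t (n-1)) * Real.cos (l*(t n - t (n-1))))/(2*l))
        + p (t n) * ((l*(t n - t (n-1)) - Real.sin (l*(t n - t (n-1))) * Real.cos (l*(t n - t (n-1))))/(2*l)))
        / (Real.sin (l*(t n - t (n-1))))^2)
    ((1 - Real.cos (l*(t n - t (n-1))))/(l * Real.sin (l*(t n - t (n-1)))))
    (by field_simp <;> ring) key g1 g2 g3 hmax

lemma rowInterior {l : ℝ} (hl : 0 < l) {n : ℕ} {t : ℕ → ℝ} (ht : ∀ i < n, t i < t (i+1))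
    (ht0 : t 0 = 0) (htn : t n = π/l)
    {f p : ℝ → ℝ} (hf : ContinuousOn f (Set.Icc 0 (π/l)))
    (hfb : ∀ x ∈ Set.Icc 0 (π/l), |f x| ≤ 1)
    (hp : IsTrigSpline l n t p)
    (horth : ∀ s : ℝ → ℝ, IsTrigSpline l n t s → ip 0 (π/l) (fun x => f x - p x) s = 0)
    {i : ℕ} (hi1 : 1 ≤ i) (hin : i < n)
    (hσL : l*(t i - t (i-1)) ≤ π/2) (hσR : l*(t (i+1) - t i) ≤ π/2)
    (hmaxL : |p (t (i-1))| ≤ |p (t i)|) (hmaxR : |p (t (i+1))| ≤ |p (t i)|) :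
    |p (t i)| ≤ 15 := by
  have hπ := Real.pi_pos
  have hii : i - 1 + 1 = i := by omega
  have hab : t (i-1) < t i := by have := ht (i-1) (by omega); rwa [hii] at this
  have hbc : t i < t (i+1) := ht i hin
  have hσ1pos : 0 < l*(t i - t (i-1)) := by nlinarith
  have hσ1π : l*(t i - t (i-1)) < π := by linarith
  have hσ2pos : 0 < l*(t (i+1) - t i) := by nlinarith
  have hσ2π : l*(t (i+1) - t i) < π := by linarith
  have hs1 : 0 < Real.sin (l*(t i - t (i-1))) := Real.sin_pos_of_pos_of_lt_pi hσ1pos hσ1π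
  have hs2 : 0 < Real.sin (l*(t (i+1) - t i)) := Real.sin_pos_of_pos_of_lt_pi hσ2pos hσ2π
  set H := hatM l (t (i-1)) (t i) (t (i+1)) with hH
  have hHc : Continuous H := hatM_continuous hl hab hbc hs1 hs2
  have hH0 : ∀ x ∈ Set.Icc (t 0) (t n), 0 ≤ H x := fun x _ =>
    hatM_nonneg hl hab hbc hσ1π.le hσ2π.le hs1 hs2 x
  have key := orth_split hl ht (by omega) ht0 htn hf hfb hp.1 hHc hH0
    (horth H (hatM_spline hl ht hi1 hin hs1 hs2))
  have hG1 : ∀ x ∈ Set.Icc (t (i-1)) (t i), Real.sin (l*(t i - t (i-1))) * H x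
      = Real.sin (l*(x - t (i-1))) := by
    intro x hx
    rw [hH, hatM_eq_left hab hx]
    field_simp
  have hG2 : ∀ x ∈ Set.Icc (t i) (t (i+1)), Real.sin (l*(t (i+1) - t i)) * H x
      = Real.sin (l*(t (i+1) - x)) := by
    intro x hx
    rw [hH, hatM_eq_right hab hbc hs1 hs2 hx]
    field_simp
  obtain ⟨A1, B1, hAB1⟩ := hp.2 (i-1) (by omega)
  rw [hii] at hAB1
  obtain ⟨A2, B2, hAB2⟩ := hp.2 i hin
  have hP1 := nodal_piece A1 B1 hAB1 hab.le
  have hP2 := nodal_piece A2 B2 hAB2 hbc.le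
  have piece1 := int_piece_left hl hσ1pos hσ1π (p (t (i-1))) (p (t i)) hP1 hG1
  have piece2 := int_piece_right hl hσ2pos hσ2π (p (t i)) (p (t (i+1))) hP2 hG2
  have hzeroL : ∀ k, k + 1 ≤ i - 1 → ∀ x ∈ Set.Icc (t k) (t (k+1)), H x = 0 := by
    intro k hk1 x hx
    exact hatM_eq_zero_left (hx.2.trans (t_mono ht (k+1) (i-1) hk1 (by omega)))
  have hzeroR : ∀ k, i + 1 ≤ k → k < n → ∀ x ∈ Set.Icc (t k) (t (k+1)), H x = 0 := by
    intro k hk1 hkn x hx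
    exact hatM_eq_zero_right hab hbc ((t_mono ht (i+1) k hk1 (by omega)).trans hx.1)
  have hpH : (∫ x in (t 0)..(t n), p x * H x)
      = (p (t (i-1)) * ((Real.sin (l*(t i - t (i-1))) - l*(t i - t (i-1)) * Real.cos (l*(t i - t (i-1))))/(2*l))
        + p (t i) * ((l*(t i - t (i-1)) - Real.sin (l*(t i - t (i-1))) * Real.cos (l*(t i - t (i-1))))/(2*l)))
        / (Real.sin (l*(t i - t (i-1))))^2
      + (p (t i) * ((l*(t (i+1) - t i) - Real.sin (l*(t (i+1) - t i)) * Real.cos (l*(t (i+1) - t i)))/(2*l))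
        + p (t (i+1)) * ((Real.sin (l*(t (i+1) - t i)) - l*(t (i+1) - t i) * Real.cos (l*(t (i+1) - t i)))/(2*l)))
        / (Real.sin (l*(t (i+1) - t i)))^2 := by
    rw [split_int (g := fun x => p x * H x) ht (hp.1.mul hHc.continuousOn)]
    apply sum_two_spikes (by omega : i - 1 < i) hin
    intro k hk
    split_ifs with h0 h1
    · subst h0
      rw [hii]
      exact piece1
    · subst h1
      exact piece2
    · rcases Nat.lt_or_ge k i with hki | hki
      · exact zero_piece (ht k hk).le (hzeroL k (by omega))
      · exact zero_piece (ht k hk).le (hzeroR k (by omega) hk)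
  have hHint : (∫ x in (t 0)..(t n), H x)
      = (1 - Real.cos (l*(t i - t (i-1))))/(l * Real.sin (l*(t i - t (i-1))))
      + (1 - Real.cos (l*(t (i+1) - t i)))/(l * Real.sin (l*(t (i+1) - t i))) := by
    rw [split_int ht hHc.continuousOn]
    apply sum_two_spikes (by omega : i - 1 < i) hin
    intro k hk
    split_ifs with h0 h1
    · subst h0
      rw [hii]
      exact int_G_left hl hσ1pos hσ1π hG1
    · subst h1
      exact int_G_right hl hσ2pos hσ2π hG2
    · rcases Nat.lt_or_ge k i with hki | hki
      · exact zero_pieceG (ht k hk).le (hzeroL k (by omega))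
      · exact zero_pieceG (ht k hk).le (hzeroR k (by omega) hk)
  rw [hpH, hHint] at key
  obtain ⟨g1L, g2L, g3L⟩ := grams hl hσ1pos hσL
  obtain ⟨g1R, g2R, g3R⟩ := grams hl hσ2pos hσR
  apply row_combine (p (t (i-1))) (p (t i)) (p (t (i+1)))
    (((l*(t i - t (i-1)) - Real.sin (l*(t i - t (i-1))) * Real.cos (l*(t i - t (i-1))))/(2*l))
      / (Real.sin (l*(t i - t (i-1))))^2)
    (((l*(t (i+1) - t i) - Real.sin (l*(t (i+1) - t i)) * Real.cos (l*(t (i+1) - t i)))/(2*l))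
      / (Real.sin (l*(t (i+1) - t i)))^2)
    (((Real.sin (l*(t i - t (i-1))) - l*(t i - t (i-1)) * Real.cos (l*(t i - t (i-1))))/(2*l))
      / (Real.sin (l*(t i - t (i-1))))^2)
    (((Real.sin (l*(t (i+1) - t i)) - l*(t (i+1) - t i) * Real.cos (l*(t (i+1) - t i)))/(2*l))
      / (Real.sin (l*(t (i+1) - t i)))^2)
    _
    ((1 - Real.cos (l*(t i - t (i-1))))/(l * Real.sin (l*(t i - t (i-1)))))
    ((1 - Real.cos (l*(t (i+1) - t i)))/(l * Real.sin (l*(t (i+1) - t i))))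
    ?_ key g1L g1R g2L g2R g3L g3R hmaxL hmaxR
  field_simp <;> ring

lemma p_l2_bound {l : ℝ} (hl : 0 < l) {f p : ℝ → ℝ}
    (hf : ContinuousOn f (Set.Icc 0 (π/l)))
    (hfb : ∀ x ∈ Set.Icc 0 (π/l), |f x| ≤ 1)
    (hp1 : ContinuousOn p (Set.Icc 0 (π/l)))
    (horthp : ip 0 (π/l) (fun x => f x - p x) p = 0) :
    (∫ x in (0:ℝ)..(π/l), p x * p x) ≤ π/l := by
  have hπ := Real.pi_pos
  have hT : (0:ℝ) ≤ π/l := by positivity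
  have hu : Set.uIcc (0:ℝ) (π/l) = Set.Icc 0 (π/l) := Set.uIcc_of_le hT
  have hintp : IntervalIntegrable (fun x => p x * p x) MeasureTheory.volume 0 (π/l) := by
    apply ContinuousOn.intervalIntegrable
    rw [hu]
    exact hp1.mul hp1
  have hintf : IntervalIntegrable (fun x => f x * p x) MeasureTheory.volume 0 (π/l) := by
    apply ContinuousOn.intervalIntegrable
    rw [hu]
    exact hf.mul hp1
  have horth2 : (∫ x in (0:ℝ)..(π/l), (f x - p x) * p x) = 0 := horthp
  have e : (fun x => (f x - p x) * p x) = fun x => f x * p x - p x * p x :=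
    funext fun x => by ring
  rw [e, intervalIntegral.integral_sub hintf hintp] at horth2
  have hmono : (∫ x in (0:ℝ)..(π/l), f x * p x)
      ≤ ∫ x in (0:ℝ)..(π/l), ((p x * p x)/2 + 1/2) := by
    apply intervalIntegral.integral_mono_on hT hintf
    · apply ContinuousOn.intervalIntegrable
      rw [hu]
      exact ((hp1.mul hp1).div_const 2).add continuousOn_const
    · intro x hx
      have hfx : |f x| ≤ 1 := hfb x hx
      nlinarith [abs_nonneg (f x), le_abs_self (f x), neg_abs_le (f x),
        sq_nonneg (p x - 1), sq_nonneg (p x + 1), abs_mul (f x) (p x),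
        le_abs_self (p x), neg_abs_le (p x), abs_nonneg (p x),
        mul_le_mul_of_nonneg_right hfx (abs_nonneg (p x)), abs_mul_abs_self (p x)]
  have hsplit : (∫ x in (0:ℝ)..(π/l), ((p x * p x)/2 + 1/2))
      = (∫ x in (0:ℝ)..(π/l), p x * p x)/2 + (π/l)/2 := by
    rw [intervalIntegral.integral_add (hintp.div_const 2)
      (intervalIntegrable_const)]
    rw [intervalIntegral.integral_div, intervalIntegral.integral_const]
    simp
    ring
  rw [hsplit] at hmono
  linarith

lemma caseB {l : ℝ} (hl : 0 < l) {a b : ℝ} (hab : a < b)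
    (hσpos : 0 < l*(b-a)) (hσ : l*(b-a) ≤ π/2)
    {p : ℝ → ℝ} (A B : ℝ)
    (hAB : ∀ x ∈ Set.Icc a b, p x = A*Real.sin (l*x) + B*Real.cos (l*x))
    {K : ℝ} (hKa : |p a| ≤ K) (hKb : |p b| ≤ K) {x : ℝ} (hx : x ∈ Set.Icc a b) :
    |p x| ≤ 2*K := by
  have hπ := Real.pi_pos
  have hσπ : l*(b-a) < π := by linarith
  have hs : 0 < Real.sin (l*(b-a)) := Real.sin_pos_of_pos_of_lt_pi hσpos hσπ
  have hK0 : 0 ≤ K := (abs_nonneg _).trans hKa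
  have hnod := nodal_piece A B hAB hab.le x hx
  have h1pos : 0 ≤ l*(b-x) := by nlinarith [hx.2]
  have h2pos : 0 ≤ l*(x-a) := by nlinarith [hx.1]
  have hsum : l*(b-x) + l*(x-a) = l*(b-a) := by ring
  have hsin1 : 0 ≤ Real.sin (l*(b-x)) :=
    Real.sin_nonneg_of_nonneg_of_le_pi h1pos (by nlinarith [hx.1])
  have hsin2 : 0 ≤ Real.sin (l*(x-a)) :=
    Real.sin_nonneg_of_nonneg_of_le_pi h2pos (by nlinarith [hx.2])
  have hss : Real.sin (l*(b-x)) + Real.sin (l*(x-a)) ≤ 2 * Real.sin (l*(b-a)) := by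
    have := sin_add_sin_le h1pos h2pos (by rw [hsum]; exact hσ)
    rwa [hsum] at this
  have hL : Real.sin (l*(b-a)) * |p x| = |Real.sin (l*(b-a)) * p x| := by
    rw [abs_mul, abs_of_pos hs]
  have hR : |p a * Real.sin (l*(b-x)) + p b * Real.sin (l*(x-a))|
      ≤ K * Real.sin (l*(b-x)) + K * Real.sin (l*(x-a)) := by
    calc |p a * Real.sin (l*(b-x)) + p b * Real.sin (l*(x-a))|
        ≤ |p a * Real.sin (l*(b-x))| + |p b * Real.sin (l*(x-a))| := abs_add_le _ _
      _ = |p a| * Real.sin (l*(b-x)) + |p b| * Real.sin (l*(x-a)) := by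
          rw [abs_mul, abs_mul, abs_of_nonneg hsin1, abs_of_nonneg hsin2]
      _ ≤ K * Real.sin (l*(b-x)) + K * Real.sin (l*(x-a)) := by
          apply add_le_add
          · exact mul_le_mul_of_nonneg_right hKa hsin1
          · exact mul_le_mul_of_nonneg_right hKb hsin2
  have hfin : Real.sin (l*(b-a)) * |p x| ≤ Real.sin (l*(b-a)) * (2*K) := by
    rw [hL, hnod]
    calc |p a * Real.sin (l*(b-x)) + p b * Real.sin (l*(x-a))|
        ≤ K * Real.sin (l*(b-x)) + K * Real.sin (l*(x-a)) := hR
      _ = K * (Real.sin (l*(b-x)) + Real.sin (l*(x-a))) := by ring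
      _ ≤ K * (2 * Real.sin (l*(b-a))) := mul_le_mul_of_nonneg_left hss hK0
      _ = Real.sin (l*(b-a)) * (2*K) := by ring
  exact le_of_mul_le_mul_left hfin hs

lemma piece_le_whole {p : ℝ → ℝ} {n : ℕ} {t : ℕ → ℝ} (ht : ∀ i < n, t i < t (i+1))
    (hp1 : ContinuousOn p (Set.Icc (t 0) (t n))) {k : ℕ} (hk : k < n) :
    (∫ x in (t k)..(t (k+1)), p x * p x) ≤ ∫ x in (t 0)..(t n), p x * p x := by
  have hint : ∀ i j, i ≤ j → j ≤ n →
      IntervalIntegrable (fun x => p x * p x) MeasureTheory.volume (t i) (t j) := by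
    intro i j hij hjn
    apply ContinuousOn.intervalIntegrable
    rw [Set.uIcc_of_le (t_mono ht i j hij hjn)]
    exact (hp1.mul hp1).mono (Set.Icc_subset_Icc (t_mono ht 0 i (by omega) (by omega))
      (t_mono ht j n hjn (by omega)))
  have e1 : (∫ x in (t 0)..(t n), p x * p x)
      = (∫ x in (t 0)..(t k), p x * p x) + ∫ x in (t k)..(t n), p x * p x :=
    (intervalIntegral.integral_add_adjacent_intervals
      (hint 0 k (by omega) (by omega)) (hint k n (by omega) (by omega))).symm
  have e2 : (∫ x in (t k)..(t n), p x * p x)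
      = (∫ x in (t k)..(t (k+1)), p x * p x) + ∫ x in (t (k+1))..(t n), p x * p x :=
    (intervalIntegral.integral_add_adjacent_intervals
      (hint k (k+1) (by omega) (by omega)) (hint (k+1) n (by omega) (by omega))).symm
  have n1 : 0 ≤ ∫ x in (t 0)..(t k), p x * p x := by
    apply intervalIntegral.integral_nonneg (t_mono ht 0 k (by omega) (by omega))
    intro u _
    nlinarith [sq_nonneg (p u)]
  have n2 : 0 ≤ ∫ x in (t (k+1))..(t n), p x * p x := by
    apply intervalIntegral.integral_nonneg (t_mono ht (k+1) n (by omega) (by omega))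
    intro u _
    nlinarith [sq_nonneg (p u)]
  linarith [e1, e2]


/-- On `[0, π/λ]` the sup-norms of the `L²`-orthogonal projectors onto the trigonometric
spline spaces `𝕊(D² + λ², Δ)` are bounded uniformly over all partitions `Δ`:
`M(λ, π) < ∞`. -/
theorem trigSpline_projector_bounded_on_half_period (l : ℝ) (hl : 0 < l) :
    ∃ C : ℝ, ∀ (n : ℕ), 1 ≤ n → ∀ t : ℕ → ℝ, (∀ i < n, t i < t (i + 1)) →
      t 0 = 0 → t n = Real.pi / l →
      ∀ f : ℝ → ℝ, ContinuousOn f (Set.Icc 0 (Real.pi / l)) →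
        (∀ x ∈ Set.Icc 0 (Real.pi / l), |f x| ≤ 1) →
        ∀ p : ℝ → ℝ, IsTrigSpline l n t p →
          (∀ s : ℝ → ℝ, IsTrigSpline l n t s →
            ip 0 (Real.pi / l) (fun x => f x - p x) s = 0) →
          ∀ x ∈ Set.Icc 0 (Real.pi / l), |p x| ≤ C := by
  refine ⟨30, ?_⟩
  intro n hn t ht ht0 htn f hf hfb p hp horth x hx
  have hπ := Real.pi_pos
  have hIcc : Set.Icc (0:ℝ) (π/l) = Set.Icc (t 0) (t n) := by rw [ht0, htn]
  have hp1 : ContinuousOn p (Set.Icc 0 (π/l)) := by rw [hIcc]; exact hp.1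
  have hL2 : (∫ x in (0:ℝ)..(π/l), p x * p x) ≤ π/l := p_l2_bound hl hf hfb hp1 (horth p hp)
  have hL2' : (∫ x in (t 0)..(t n), p x * p x) ≤ π/l := by rw [ht0, htn]; exact hL2
  have caseApiece : ∀ k, k < n → π/2 ≤ l*(t (k+1) - t k) →
      ∀ y ∈ Set.Icc (t k) (t (k+1)), |p y| ≤ 4 := by
    intro k hk hσ y hy
    obtain ⟨A, B, hAB⟩ := hp.2 k hk
    have hpiece : (∫ x in (t k)..(t (k+1)), (A*Real.sin (l*x)+B*Real.cos (l*x))^2) ≤ π/l := by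
      have e : (∫ x in (t k)..(t (k+1)), (A*Real.sin (l*x)+B*Real.cos (l*x))^2)
          = ∫ x in (t k)..(t (k+1)), p x * p x := by
        apply intervalIntegral.integral_congr
        intro u hu
        rw [Set.uIcc_of_le (ht k hk).le] at hu
        simp only [hAB u hu]
        ring
      rw [e]
      exact (piece_le_whole ht hp.1 hk).trans hL2'
    rw [hAB y hy]
    exact caseA hl hσ hpiece y
  obtain ⟨i, hi, hmax⟩ := argmax_node (n := n) (fun j => p (t j))
  have hnode : ∀ j, j ≤ n → |p (t j)| ≤ 15 := by
    suffices h : |p (t i)| ≤ 15 by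
      intro j hj
      exact (hmax j hj).trans h
    by_cases hi0 : i = 0
    · subst hi0
      by_cases hσ : π/2 ≤ l*(t 1 - t 0)
      · have := caseApiece 0 (by omega) (by simpa using hσ) (t 0) ⟨le_rfl, (ht 0 (by omega)).le⟩
        linarith
      · push_neg at hσ
        exact rowLeft hl ht hn ht0 htn hf hfb hp horth hσ.le (hmax 1 (by omega))
    · by_cases hin : i = n
      · simp only [hin] at hmax ⊢
        have hnn : n - 1 + 1 = n := by omega
        by_cases hσ : π/2 ≤ l*(t n - t (n-1))
        · have hmem : t n ∈ Set.Icc (t (n-1)) (t ((n-1)+1)) := by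
            rw [hnn]
            exact ⟨(t_mono ht (n-1) n (by omega) (by omega)), le_rfl⟩
          have := caseApiece (n-1) (by omega) (by rw [hnn]; exact hσ) (t n) hmem
          linarith
        · push_neg at hσ
          exact rowRight hl ht hn ht0 htn hf hfb hp horth hσ.le (hmax (n-1) (by omega))
      · have hi1 : 1 ≤ i := by omega
        have hiN : i < n := by omega
        have hii : i - 1 + 1 = i := by omega
        by_cases hσL : π/2 ≤ l*(t i - t (i-1))
        · have hmem : t i ∈ Set.Icc (t (i-1)) (t ((i-1)+1)) := by
            rw [hii]
            exact ⟨(t_mono ht (i-1) i (by omega) (by omega)), le_rfl⟩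
          have := caseApiece (i-1) (by omega) (by rw [hii]; exact hσL) (t i) hmem
          linarith
        · by_cases hσR : π/2 ≤ l*(t (i+1) - t i)
          · have := caseApiece i hiN hσR (t i) ⟨le_rfl, (ht i hiN).le⟩
            linarith
          · push_neg at hσL hσR
            exact rowInterior hl ht ht0 htn hf hfb hp horth hi1 hiN hσL.le hσR.le
              (hmax (i-1) (by omega)) (hmax (i+1) (by omega))
  have hx' : t 0 ≤ x ∧ x ≤ t n := by
    rw [ht0, htn]
    exact ⟨hx.1, hx.2⟩
  obtain ⟨k, hk, hk1, hk2⟩ := locate hn hx'.1 hx'.2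
  by_cases hσ : π/2 ≤ l*(t (k+1) - t k)
  · have := caseApiece k hk hσ x ⟨hk1, hk2⟩
    linarith
  · push_neg at hσ
    obtain ⟨A, B, hAB⟩ := hp.2 k hk
    have hσpos : 0 < l*(t (k+1) - t k) := by nlinarith [ht k hk]
    have := caseB hl (ht k hk) hσpos hσ.le A B hAB
      (hnode k (by omega)) (hnode (k+1) (by omega)) ⟨hk1, hk2⟩
    linarith
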